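/- Let E be a real separable Hilbert space with orthonormal basis, Pₙ the orthogonal projection onto the span of the first n basis vectors, D ⊆ E open, F : D → E compact continuous with f = id − F nonvanishing on the boundary ∂U of an open bounded set U with cl U ⊆ D and f⁻¹(0) ⊆ U, and assume Pₙ(cl U) ⊆ D for all n ≥ N. Then there exists M ≥ N such that for all n ≥ M, t ∈ [0,1], and x ∈ ∂U: (1−t)(x − F(x)) + t(x − PₙF(Pₙx)) ≠ 0. -/
import Mathlib


open Bornology RealInnerProductSpace Topology

/-- Orthogonal projection onto the span of the first `n` vectors of the
orthonormal (Hilbert) basis `b`. -/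
noncomputable def projN {E : Type*} [NormedAddCommGroup E] [InnerProductSpace ℝ E]
    (b : HilbertBasis ℕ ℝ E) (n : ℕ) (x : E) : E :=
  ∑ i ∈ Finset.range n, ⟪b i, x⟫ • b i

section Aux

open Filter

variable {E : Type*} [NormedAddCommGroup E] [InnerProductSpace ℝ E] [CompleteSpace E]

set_option linter.unusedSectionVars false

lemma projN_sub (b : HilbertBasis ℕ ℝ E) (n : ℕ) (x y : E) :
    projN b n (x - y) = projN b n x - projN b n y := by
  simp [projN, inner_sub_right, sub_smul, Finset.sum_sub_distrib]

lemma norm_projN_le (b : HilbertBasis ℕ ℝ E) (n : ℕ) (x : E) :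
    ‖projN b n x‖ ≤ ‖x‖ := by
  have h1 : ‖projN b n x‖ ^ 2 = ∑ i ∈ Finset.range n, ‖⟪b i, x⟫‖ ^ 2 := by
    rw [← real_inner_self_eq_norm_sq]
    rw [projN, b.orthonormal.inner_sum]
    simp [Real.norm_eq_abs, sq_abs, starRingEnd_apply, sq]
  have h2 := b.orthonormal.sum_inner_products_le (s := Finset.range n) x
  nlinarith [norm_nonneg (projN b n x), norm_nonneg x]

lemma tendsto_projN (b : HilbertBasis ℕ ℝ E) (x : E) :
    Tendsto (fun n => projN b n x) atTop (𝓝 x) := by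
  have := (b.hasSum_repr x).tendsto_sum_nat
  simpa [projN, b.repr_apply_apply] using this

lemma projN_unif (b : HilbertBasis ℕ ℝ E) {K : Set E} (hK : IsCompact K)
    {ε : ℝ} (hε : 0 < ε) : ∃ m, ∀ n ≥ m, ∀ y ∈ K, ‖projN b n y - y‖ < ε := by
  obtain ⟨s, hsK, hcov⟩ := hK.elim_nhds_subcover (fun z => Metric.ball z (ε / 3))
    (fun z _ => Metric.ball_mem_nhds z (by linarith))
  have hev : ∀ᶠ m in atTop, ∀ z ∈ s, ‖projN b m z - z‖ < ε / 3 := by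
    rw [Filter.eventually_all_finset]
    intro z _
    have := (tendsto_projN b z)
    have h2 := Metric.tendsto_atTop.mp this (ε / 3) (by linarith)
    obtain ⟨m₀, hm₀⟩ := h2
    exact Filter.eventually_atTop.mpr ⟨m₀, fun m hm => by
      simpa [dist_eq_norm] using hm₀ m hm⟩
  obtain ⟨m, hm⟩ := Filter.eventually_atTop.mp hev
  refine ⟨m, fun k hk y hy => ?_⟩
  obtain ⟨z, hz, hyz⟩ := Set.mem_iUnion₂.mp (hcov hy)
  have h1 : ‖projN b k y - projN b k z‖ ≤ ‖y - z‖ := by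
    rw [← projN_sub]; exact norm_projN_le b k (y - z)
  have h2 : ‖y - z‖ < ε / 3 := by
    simpa [dist_eq_norm] using hyz
  have h3 : ‖projN b k z - z‖ < ε / 3 := hm k hk z hz
  calc ‖projN b k y - y‖
      = ‖(projN b k y - projN b k z) + (projN b k z - z) + (z - y)‖ := by abel_nf
    _ ≤ ‖projN b k y - projN b k z‖ + ‖projN b k z - z‖ + ‖z - y‖ := norm_add₃_le
    _ < ε / 3 + ε / 3 + ε / 3 := by
        have : ‖z - y‖ < ε / 3 := by rwa [norm_sub_rev]
        linarith
    _ = ε := by ring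

end Aux

open Filter in

/-- The straight-line homotopy between `f = id - F` and the suspension
`Σfₙ(x) = x - PₙF(Pₙx)` does not vanish on `∂U` for `n` large enough. -/
theorem stmt13 {E : Type*} [NormedAddCommGroup E] [InnerProductSpace ℝ E]
    [CompleteSpace E] (b : HilbertBasis ℕ ℝ E)
    (D : Set E) (hD : IsOpen D)
    (F : E → E) (hFc : ContinuousOn F D)
    (hF : ∀ s ⊆ D, IsBounded s → IsCompact (closure (F '' s)))
    (U : Set E) (hU : IsOpen U) (hUb : IsBounded U)
    (hclU : closure U ⊆ D)
    (hzero : {x ∈ D | x - F x = 0} ⊆ U)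
    (hnv : ∀ x ∈ frontier U, x - F x ≠ 0)
    (N : ℕ) (hN : ∀ n ≥ N, projN b n '' closure U ⊆ D) :
    ∃ M ≥ N, ∀ n ≥ M, ∀ t ∈ Set.Icc (0 : ℝ) 1, ∀ x ∈ frontier U,
      (1 - t) • (x - F x) + t • (x - projN b n (F (projN b n x))) ≠ 0 := by
  by_contra hcon
  push_neg at hcon
  choose n hn t ht x hx heq using fun k => hcon (N + k) (Nat.le_add_right N k)
  -- the set S and compact set K
  set S : Set E := closure U ∪ ⋃ m, projN b (N + m) '' closure U with hS
  have hSD : S ⊆ D := by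
    rintro y (hy | hy)
    · exact hclU hy
    · obtain ⟨m, hm⟩ := Set.mem_iUnion.mp hy
      exact hN (N + m) (Nat.le_add_right N m) hm
  have hSb : IsBounded S := by
    obtain ⟨R, hR⟩ := (isBounded_iff_forall_norm_le).mp hUb.closure
    refine (isBounded_iff_forall_norm_le).mpr ⟨R, ?_⟩
    rintro y (hy | hy)
    · exact hR y hy
    · obtain ⟨m, z, hz, rfl⟩ := Set.mem_iUnion.mp hy
      exact (norm_projN_le b _ z).trans (hR z hz)
  have hK : IsCompact (closure (F '' S)) := hF S hSD hSb
  set K := closure (F '' S) with hKdef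
  have hxcl : ∀ k, x k ∈ closure U := fun k => frontier_subset_closure (hx k)
  have hPS : ∀ k, projN b (n k) (x k) ∈ S := by
    intro k
    have hnk := hn k
    refine Or.inr (Set.mem_iUnion.mpr ⟨n k - N, ?_⟩)
    have hkn : N + (n k - N) = n k := by omega
    rw [hkn]
    exact Set.mem_image_of_mem _ (hxcl k)
  have hmem1 : ∀ k, F (x k) ∈ K :=
    fun k => subset_closure (Set.mem_image_of_mem F (Or.inl (hxcl k)))
  have hmem2 : ∀ k, F (projN b (n k) (x k)) ∈ K :=
    fun k => subset_closure (Set.mem_image_of_mem F (hPS k))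
  -- extract subsequences
  obtain ⟨t₀, ht₀, φ₁, hφ₁, htend1⟩ :=
    (isCompact_Icc (a := (0:ℝ)) (b := 1)).tendsto_subseq ht
  obtain ⟨u, hu, φ₂, hφ₂, htend2⟩ :=
    hK.tendsto_subseq (fun k => hmem1 (φ₁ k))
  obtain ⟨v, hv, φ₃, hφ₃, htend3⟩ :=
    hK.tendsto_subseq (fun k => hmem2 (φ₁ (φ₂ k)))
  set ψ : ℕ → ℕ := fun k => φ₁ (φ₂ (φ₃ k)) with hψ
  have hψmono : StrictMono ψ := hφ₁.comp (hφ₂.comp hφ₃)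
  have hψge : ∀ k, k ≤ ψ k := fun k => hψmono.le_apply
  have hnψ : ∀ k, k ≤ n (ψ k) := fun k => le_trans (le_trans (hψge k) (Nat.le_add_left _ N)) (hn (ψ k))
  have hnψtop : Filter.Tendsto (fun k => n (ψ k)) atTop atTop :=
    tendsto_atTop_mono hnψ tendsto_id
  -- limits along ψ
  have ltt : Filter.Tendsto (fun k => t (ψ k)) atTop (𝓝 t₀) :=
    htend1.comp ((hφ₂.comp hφ₃).tendsto_atTop)
  have lu : Filter.Tendsto (fun k => F (x (ψ k))) atTop (𝓝 u) :=
    htend2.comp hφ₃.tendsto_atTop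
  have lv : Filter.Tendsto (fun k => F (projN b (n (ψ k)) (x (ψ k)))) atTop (𝓝 v) := htend3
  -- the error term tends to zero
  have lerr : Filter.Tendsto
      (fun k => projN b (n (ψ k)) (F (projN b (n (ψ k)) (x (ψ k))))
        - F (projN b (n (ψ k)) (x (ψ k)))) atTop (𝓝 0) := by
    rw [NormedAddCommGroup.tendsto_nhds_zero]
    intro ε hε
    obtain ⟨m, hm⟩ := projN_unif b hK hε
    refine Filter.eventually_atTop.mpr ⟨m, fun k hk => ?_⟩
    exact hm (n (ψ k)) (le_trans hk (hnψ k)) _ (hmem2 (ψ k))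
  have lP : Filter.Tendsto
      (fun k => projN b (n (ψ k)) (F (projN b (n (ψ k)) (x (ψ k))))) atTop (𝓝 v) := by
    have := lv.add lerr
    simpa using this.congr (fun k => by abel)
  -- limit point
  set x₀ : E := (1 - t₀) • u + t₀ • v with hx₀
  have hxeq : ∀ k, x k = (1 - t k) • F (x k)
      + t k • projN b (n k) (F (projN b (n k) (x k))) := by
    intro k
    have h := heq k
    have h2 : x k - ((1 - t k) • F (x k)
        + t k • projN b (n k) (F (projN b (n k) (x k))))
        = (1 - t k) • (x k - F (x k))
          + t k • (x k - projN b (n k) (F (projN b (n k) (x k)))) := by module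
    rw [h] at h2
    exact sub_eq_zero.mp h2
  have lx : Filter.Tendsto (fun k => x (ψ k)) atTop (𝓝 x₀) := by
    have : Filter.Tendsto (fun k => (1 - t (ψ k)) • F (x (ψ k))
        + t (ψ k) • projN b (n (ψ k)) (F (projN b (n (ψ k)) (x (ψ k))))) atTop (𝓝 x₀) :=
      (((tendsto_const_nhds.sub ltt).smul lu).add (ltt.smul lP))
    exact this.congr (fun k => (hxeq (ψ k)).symm)
  have hx₀fr : x₀ ∈ frontier U :=
    isClosed_frontier.mem_of_tendsto lx (Filter.Eventually.of_forall fun k => hx (ψ k))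
  have hx₀D : x₀ ∈ D := hclU (frontier_subset_closure hx₀fr)
  have hFcont : ContinuousAt F x₀ := hFc.continuousAt (hD.mem_nhds hx₀D)
  -- u = F x₀
  have hu' : u = F x₀ := tendsto_nhds_unique lu (hFcont.tendsto.comp lx)
  -- projN (n ψ k) (x ψ k) → x₀
  have lPx : Filter.Tendsto (fun k => projN b (n (ψ k)) (x (ψ k))) atTop (𝓝 x₀) := by
    rw [tendsto_iff_norm_sub_tendsto_zero]
    have hb : ∀ k, ‖projN b (n (ψ k)) (x (ψ k)) - x₀‖
        ≤ ‖x (ψ k) - x₀‖ + ‖projN b (n (ψ k)) x₀ - x₀‖ := by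
      intro k
      calc ‖projN b (n (ψ k)) (x (ψ k)) - x₀‖
          = ‖(projN b (n (ψ k)) (x (ψ k)) - projN b (n (ψ k)) x₀)
            + (projN b (n (ψ k)) x₀ - x₀)‖ := by abel_nf
        _ ≤ ‖projN b (n (ψ k)) (x (ψ k)) - projN b (n (ψ k)) x₀‖
            + ‖projN b (n (ψ k)) x₀ - x₀‖ := norm_add_le _ _
        _ ≤ ‖x (ψ k) - x₀‖ + ‖projN b (n (ψ k)) x₀ - x₀‖ := by
            have := norm_projN_le b (n (ψ k)) (x (ψ k) - x₀)
            rw [projN_sub] at this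
            linarith
    have h1 : Filter.Tendsto (fun k => ‖x (ψ k) - x₀‖) atTop (𝓝 0) :=
      tendsto_iff_norm_sub_tendsto_zero.mp lx
    have h2 : Filter.Tendsto (fun k => ‖projN b (n (ψ k)) x₀ - x₀‖) atTop (𝓝 0) := by
      have := (tendsto_iff_norm_sub_tendsto_zero.mp (tendsto_projN b x₀)).comp hnψtop
      exact this
    have := h1.add h2
    rw [add_zero] at this
    exact squeeze_zero (fun k => norm_nonneg _) hb this
  have hv' : v = F x₀ := tendsto_nhds_unique lv (hFcont.tendsto.comp lPx)
  rw [hu', hv'] at hx₀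
  have hcomb : (1 - t₀) • F x₀ + t₀ • F x₀ = F x₀ := by module
  exact hnv x₀ hx₀fr (sub_eq_zero.mpr (hx₀.trans hcomb))
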